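/- Let u be a smooth strictly plurisubharmonic function on an open set Ω ⊆ ℂ^n satisfying det(u_{ij̄}) = e^{(n+1)u} on Ω, and set A = (u_{ij̄}), B = (u_{ij}). Then, as an identity of n×n matrix-valued functions on Ω, u^{ij̄} ∂_i∂_{j̄} B = u^{ij̄} (∂_{j̄} B)·(Ā)⁻¹·(∂_i Ā) + (n+1)B (summation over i, j). -/

import Mathlib

open Complex Matrix
open scoped ComplexOrder

noncomputable section

/-- Wirtinger derivative `∂/∂z_j` of a complex-valued function on `ℂⁿ`. -/
def wdz {n : ℕ} (f : (Fin n → ℂ) → ℂ) (j : Fin n) (z : Fin n → ℂ) : ℂ :=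
  (fderiv ℝ f z (Pi.single j 1) - Complex.I * fderiv ℝ f z (Pi.single j Complex.I)) / 2

/-- Wirtinger derivative `∂/∂z̄_j` of a complex-valued function on `ℂⁿ`. -/
def wdzbar {n : ℕ} (f : (Fin n → ℂ) → ℂ) (j : Fin n) (z : Fin n → ℂ) : ℂ :=
  (fderiv ℝ f z (Pi.single j 1) + Complex.I * fderiv ℝ f z (Pi.single j Complex.I)) / 2

/-- A real-valued function on `ℂⁿ` viewed as complex-valued. -/
def cplx {n : ℕ} (u : (Fin n → ℂ) → ℝ) : (Fin n → ℂ) → ℂ := fun z => (u z : ℂ)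

/-- The complex Hessian `A = (u_{ij̄}) = (∂_i ∂_{j̄} u)`. -/
def hessA {n : ℕ} (u : (Fin n → ℂ) → ℝ) (z : Fin n → ℂ) : Matrix (Fin n) (Fin n) ℂ :=
  Matrix.of fun i j => wdz (wdzbar (cplx u) j) i z

/-- The matrix `B = (u_{ij}) = (∂_i ∂_j u)`. -/
def hessB {n : ℕ} (u : (Fin n → ℂ) → ℝ) (z : Fin n → ℂ) : Matrix (Fin n) (Fin n) ℂ :=
  Matrix.of fun i j => wdz (wdz (cplx u) j) i z

/-- `u^{ij̄}`, the entries of the inverse of the complex Hessian, with the convention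
`∑_j u^{ij̄} u_{kj̄} = δ_{ik}`. -/
def uInv {n : ℕ} (u : (Fin n → ℂ) → ℝ) (z : Fin n → ℂ) (i j : Fin n) : ℂ :=
  (hessA u z)⁻¹ j i

/-- Entrywise Wirtinger derivative `∂_i` of a matrix-valued function. -/
def mwdz {n : ℕ} (F : (Fin n → ℂ) → Matrix (Fin n) (Fin n) ℂ) (i : Fin n) (z : Fin n → ℂ) :
    Matrix (Fin n) (Fin n) ℂ :=
  Matrix.of fun p q => wdz (fun w => F w p q) i z

/-- Entrywise Wirtinger derivative `∂_{j̄}` of a matrix-valued function. -/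
def mwdzbar {n : ℕ} (F : (Fin n → ℂ) → Matrix (Fin n) (Fin n) ℂ) (j : Fin n) (z : Fin n → ℂ) :
    Matrix (Fin n) (Fin n) ℂ :=
  Matrix.of fun p q => wdzbar (fun w => F w p q) j z

/-- Entrywise complex conjugate of a matrix. -/
def mconj {n : ℕ} (M : Matrix (Fin n) (Fin n) ℂ) : Matrix (Fin n) (Fin n) ℂ :=
  M.map (starRingEnd ℂ)

/-- The real coordinate directions `x_1, …, x_n, y_1, …, y_n` of `ℂⁿ`. -/
def realDir {n : ℕ} : (Fin n ⊕ Fin n) → (Fin n → ℂ)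
  | Sum.inl j => Pi.single j 1
  | Sum.inr j => Pi.single j Complex.I

/-- The real Hessian of `u : ℂⁿ → ℝ` in the coordinates `(x_1,…,x_n,y_1,…,y_n)`. -/
def realHess {n : ℕ} (u : (Fin n → ℂ) → ℝ) (z : Fin n → ℂ) :
    Matrix (Fin n ⊕ Fin n) (Fin n ⊕ Fin n) ℝ :=
  Matrix.of fun a b => fderiv ℝ (fun w => fderiv ℝ u w (realDir b)) z (realDir a)

/-!
Differentiating `log det A = (n + 1) u` once (Jacobi's formula) gives
`tr (A⁻¹ ∂_q A) = (n + 1) u_q`; differentiating again, with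
`∂_p (A⁻¹) = -A⁻¹ (∂_p A) A⁻¹`, gives
`tr (A⁻¹ ∂_p ∂_q A) = tr (A⁻¹ ∂_p A A⁻¹ ∂_q A) + (n + 1) u_{pq}`.
Since derivatives of a smooth function commute, the `(p, q)` entry of `u^{ij̄} ∂_i ∂_{j̄} B` is
`tr (A⁻¹ ∂_p ∂_q A)`, and, as `Ā = Aᵀ` for the Hermitian matrix `A`, the `(p, q)` entry of
`u^{ij̄} (∂_{j̄} B) Ā⁻¹ (∂_i Ā)` is `tr (A⁻¹ ∂_q A A⁻¹ ∂_p A)`; the two traces agree by cyclicity.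
-/

open Filter Topology
open scoped ContDiff

section MatrixSmoothness

variable {𝕜 E 𝔸 ι : Type*} [NontriviallyNormedField 𝕜] [NormedAddCommGroup E] [NormedSpace 𝕜 E]
  [Fintype ι] [DecidableEq ι] {k : WithTop ℕ∞} {s : Set E}

theorem contDiffOn_det [NormedCommRing 𝔸] [NormedAlgebra 𝕜 𝔸] {M : E → Matrix ι ι 𝔸}
    (hM : ∀ p q, ContDiffOn 𝕜 k (fun w => M w p q) s) :
    ContDiffOn 𝕜 k (fun w => (M w).det) s := by
  simp only [Matrix.det_apply']
  exact ContDiffOn.sum fun σ _ => contDiffOn_const.mul (contDiffOn_prod fun i _ => hM _ _)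

theorem contDiffOn_adjugate_apply [NormedCommRing 𝔸] [NormedAlgebra 𝕜 𝔸] {M : E → Matrix ι ι 𝔸}
    (hM : ∀ p q, ContDiffOn 𝕜 k (fun w => M w p q) s) (i j : ι) :
    ContDiffOn 𝕜 k (fun w => (M w).adjugate i j) s := by
  simp only [Matrix.adjugate_apply]
  refine contDiffOn_det fun p q => ?_
  simp only [Matrix.updateRow_apply]
  split_ifs
  exacts [contDiffOn_const, hM p q]

theorem contDiffOn_inv_apply [NormedField 𝔸] [NormedAlgebra 𝕜 𝔸] {M : E → Matrix ι ι 𝔸}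
    (hM : ∀ p q, ContDiffOn 𝕜 k (fun w => M w p q) s) (hdet : ∀ w ∈ s, (M w).det ≠ 0)
    (i j : ι) : ContDiffOn 𝕜 k (fun w => (M w)⁻¹ i j) s := by
  simp only [Matrix.inv_def, Ring.inverse_eq_inv', Matrix.smul_apply, smul_eq_mul]
  exact ((contDiffOn_det hM).inv hdet).mul (contDiffOn_adjugate_apply hM i j)

end MatrixSmoothness

theorem Matrix.det_updateCol_eq_sum_perm {ι R : Type*} [Fintype ι] [DecidableEq ι] [CommRing R]
    (M : Matrix ι ι R) (i : ι) (c : ι → R) :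
    (M.updateCol i c).det
      = ∑ σ : Equiv.Perm ι,
          (Equiv.Perm.sign σ : R) * ((∏ i' ∈ Finset.univ.erase i, M (σ i') i') * c (σ i)) := by
  rw [Matrix.det_apply']
  refine Finset.sum_congr rfl fun σ _ => ?_
  rw [← Finset.prod_erase_mul _ _ (Finset.mem_univ i)]
  congr 2
  · exact Finset.prod_congr rfl fun i' hi' => by
      rw [Matrix.updateCol_apply, if_neg (Finset.ne_of_mem_erase hi')]
  · simp

-- Jacobi's formula, in the shape the product rule gives to the derivative of the Leibniz
-- expansion of `det`.
theorem Matrix.trace_adjugate_mul_eq_sum_perm {ι R : Type*} [Fintype ι] [DecidableEq ι] [CommRing R]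
    (M H : Matrix ι ι R) :
    (M.adjugate * H).trace
      = ∑ σ : Equiv.Perm ι, (Equiv.Perm.sign σ : R) *
          ∑ i, (∏ i' ∈ Finset.univ.erase i, M (σ i') i') * H (σ i) i := by
  have hcol : ∀ i, (M.adjugate * H) i i = (M.updateCol i fun k => H k i).det := fun i => by
    rw [← Matrix.cramer_apply, Matrix.cramer_eq_adjugate_mulVec]; rfl
  simp only [Matrix.trace, Matrix.diag, hcol, Matrix.det_updateCol_eq_sum_perm, Finset.mul_sum]
  exact Finset.sum_comm

theorem mconj_eq_transpose_of_isHermitian {n : ℕ} {A : Matrix (Fin n) (Fin n) ℂ}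
    (hA : A.IsHermitian) : mconj A = Aᵀ := by
  ext i j
  exact hA.apply j i

section PairDeriv

variable {E : Type*} [NormedAddCommGroup E] [NormedSpace ℝ E] {f : E → ℂ} {z : E}

-- Both Wirtinger derivatives have this form (`s = ∓I`, `a = e_j`, `b = I • e_j`), so a single
-- commutation lemma serves every pair of them.
def pairDeriv (s : ℂ) (a b : E) (f : E → ℂ) (z : E) : ℂ :=
  (fderiv ℝ f z a + s * fderiv ℝ f z b) / 2

theorem ContDiffOn.pairDeriv {Ω : Set E} {k m : WithTop ℕ∞} (hf : ContDiffOn ℝ k f Ω)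
    (hΩ : IsOpen Ω) (hmk : m + 1 ≤ k) (s : ℂ) (a b : E) :
    ContDiffOn ℝ m (_root_.pairDeriv s a b f) Ω := by
  have hDf := hf.fderiv_of_isOpen hΩ hmk
  exact ((hDf.clm_apply contDiffOn_const).add
    (contDiffOn_const.mul (hDf.clm_apply contDiffOn_const))).div_const 2

theorem fderiv_fderiv_apply (hDf : DifferentiableAt ℝ (fderiv ℝ f) z) (v w : E) :
    fderiv ℝ (fun x => fderiv ℝ f x w) z v = fderiv ℝ (fderiv ℝ f) z v w := by
  simp [fderiv_clm_apply hDf (differentiableAt_const w)]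

theorem fderiv_pairDeriv_apply (hDf : DifferentiableAt ℝ (fderiv ℝ f) z) (s : ℂ) (a b v : E) :
    fderiv ℝ (pairDeriv s a b f) z v
      = (fderiv ℝ (fderiv ℝ f) z v a + s * fderiv ℝ (fderiv ℝ f) z v b) / 2 := by
  have hD : ∀ w, DifferentiableAt ℝ (fun x => fderiv ℝ f x w) z :=
    fun w => hDf.clm_apply (differentiableAt_const w)
  have hunfold : pairDeriv s a b f = fun x => (fderiv ℝ f x a + s * fderiv ℝ f x b) * 2⁻¹ :=
    funext fun x => div_eq_mul_inv _ _
  rw [hunfold, div_eq_mul_inv, fderiv_mul_const ((hD a).fun_add ((hD b).const_mul s)),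
    fderiv_fun_add (hD a) ((hD b).const_mul s), fderiv_const_mul (hD b)]
  simp only [_root_.smul_apply, _root_.add_apply, smul_eq_mul, fderiv_fderiv_apply hDf]
  ring

theorem pairDeriv_comm (hf : ContDiffAt ℝ 2 f z) (s t : ℂ) (a b c d : E) :
    pairDeriv s a b (pairDeriv t c d f) z = pairDeriv t c d (pairDeriv s a b f) z := by
  have hDf : DifferentiableAt ℝ (fderiv ℝ f) z :=
    (hf.fderiv_right (m := 1) le_rfl).differentiableAt one_ne_zero
  have hsymm := hf.isSymmSndFDerivAt (by simp)
  simp only [pairDeriv, fderiv_pairDeriv_apply hDf, hsymm c, hsymm d]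
  ring

end PairDeriv

theorem ContDiffOn.contDiffAt_two {E F : Type*} [NormedAddCommGroup E] [NormedSpace ℝ E]
    [NormedAddCommGroup F] [NormedSpace ℝ F] {f : E → F} {Ω : Set E} {z : E}
    (hf : ContDiffOn ℝ ∞ f Ω) (hΩ : IsOpen Ω) (hz : z ∈ Ω) : ContDiffAt ℝ 2 f z :=
  (hf.contDiffAt (hΩ.mem_nhds hz)).of_le (WithTop.coe_le_coe.2 le_top)

theorem ContDiffOn.differentiableAt_of_isOpen {E F : Type*} [NormedAddCommGroup E]
    [NormedSpace ℝ E] [NormedAddCommGroup F] [NormedSpace ℝ F] {f : E → F} {Ω : Set E} {z : E}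
    (hf : ContDiffOn ℝ ∞ f Ω) (hΩ : IsOpen Ω) (hz : z ∈ Ω) : DifferentiableAt ℝ f z :=
  (hf.contDiffAt_two hΩ hz).differentiableAt two_ne_zero

section WirtingerCommute

variable {n : ℕ} {f : (Fin n → ℂ) → ℂ} {z : Fin n → ℂ}

theorem wdz_eq_pairDeriv (f : (Fin n → ℂ) → ℂ) (j : Fin n) :
    wdz f j = pairDeriv (-I) (Pi.single j 1) (Pi.single j I) f :=
  funext fun z => by rw [wdz, pairDeriv, neg_mul, ← sub_eq_add_neg]

theorem wdzbar_eq_pairDeriv (f : (Fin n → ℂ) → ℂ) (j : Fin n) :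
    wdzbar f j = pairDeriv I (Pi.single j 1) (Pi.single j I) f :=
  rfl

theorem ContDiffOn.wdz {Ω : Set (Fin n → ℂ)} (hf : ContDiffOn ℝ ∞ f Ω) (hΩ : IsOpen Ω)
    (j : Fin n) : ContDiffOn ℝ ∞ (_root_.wdz f j) Ω := by
  rw [wdz_eq_pairDeriv]
  exact hf.pairDeriv hΩ le_rfl _ _ _

theorem ContDiffOn.wdzbar {Ω : Set (Fin n → ℂ)} (hf : ContDiffOn ℝ ∞ f Ω) (hΩ : IsOpen Ω)
    (j : Fin n) : ContDiffOn ℝ ∞ (_root_.wdzbar f j) Ω :=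
  hf.pairDeriv hΩ le_rfl _ _ _

theorem wdz_wdz_comm (hf : ContDiffAt ℝ 2 f z) (i j : Fin n) :
    wdz (wdz f j) i z = wdz (wdz f i) j z := by
  simp only [wdz_eq_pairDeriv]
  exact pairDeriv_comm hf _ _ _ _ _ _

theorem wdz_wdzbar_comm (hf : ContDiffAt ℝ 2 f z) (i j : Fin n) :
    wdz (wdzbar f j) i z = wdzbar (wdz f i) j z := by
  simp only [wdz_eq_pairDeriv, wdzbar_eq_pairDeriv]
  exact pairDeriv_comm hf _ _ _ _ _ _

end WirtingerCommute

section WirtingerRules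

variable {n : ℕ} {f g : (Fin n → ℂ) → ℂ} {z : Fin n → ℂ} {j : Fin n}

theorem wdz_congr (h : f =ᶠ[𝓝 z] g) : wdz f j z = wdz g j z := by
  simp only [wdz, h.fderiv_eq]

theorem wdz_const (c : ℂ) : wdz (fun _ => c) j z = 0 := by
  simp [wdz]

theorem wdz_const_mul (hf : DifferentiableAt ℝ f z) (c : ℂ) :
    wdz (fun w => c * f w) j z = c * wdz f j z := by
  simp only [wdz, fderiv_const_mul hf, _root_.smul_apply, smul_eq_mul]
  ring

theorem wdz_mul (hf : DifferentiableAt ℝ f z) (hg : DifferentiableAt ℝ g z) :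
    wdz (fun w => f w * g w) j z = wdz f j z * g z + f z * wdz g j z := by
  simp only [wdz, fderiv_fun_mul hf hg, _root_.add_apply, _root_.smul_apply, smul_eq_mul]
  ring

theorem wdz_sum {ι : Type*} (s : Finset ι) {F : ι → (Fin n → ℂ) → ℂ}
    (hF : ∀ i ∈ s, DifferentiableAt ℝ (F i) z) :
    wdz (fun w => ∑ i ∈ s, F i w) j z = ∑ i ∈ s, wdz (F i) j z := by
  simp only [wdz, fderiv_fun_sum hF, _root_.sum_apply, Finset.mul_sum,
    ← Finset.sum_sub_distrib, Finset.sum_div]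

theorem wdz_prod {ι : Type*} [DecidableEq ι] (s : Finset ι) {F : ι → (Fin n → ℂ) → ℂ}
    (hF : ∀ i ∈ s, DifferentiableAt ℝ (F i) z) :
    wdz (fun w => ∏ i ∈ s, F i w) j z = ∑ i ∈ s, (∏ i' ∈ s.erase i, F i' z) * wdz (F i) j z := by
  simp only [wdz, fderiv_finsetProd hF, _root_.sum_apply, _root_.smul_apply, smul_eq_mul,
    Finset.mul_sum, ← Finset.sum_sub_distrib, Finset.sum_div]
  exact Finset.sum_congr rfl fun i _ => by ring

theorem wdz_cexp (hf : DifferentiableAt ℝ f z) :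
    wdz (fun w => Complex.exp (f w)) j z = Complex.exp (f z) * wdz f j z := by
  simp only [wdz, hf.hasFDerivAt.cexp.fderiv, _root_.smul_apply, smul_eq_mul]
  ring

variable {M N : (Fin n → ℂ) → Matrix (Fin n) (Fin n) ℂ}

theorem wdz_det (hM : ∀ p q, DifferentiableAt ℝ (fun w => M w p q) z) :
    wdz (fun w => (M w).det) j z = ((M z).adjugate * mwdz M j z).trace := by
  have hprod : ∀ σ : Equiv.Perm (Fin n), DifferentiableAt ℝ (fun w => ∏ i, M w (σ i) i) z :=
    fun σ => (HasFDerivAt.finsetProd fun i _ => (hM _ _).hasFDerivAt).differentiableAt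
  simp only [Matrix.det_apply', Matrix.trace_adjugate_mul_eq_sum_perm]
  rw [wdz_sum _ fun σ _ => (hprod σ).const_mul _]
  refine Finset.sum_congr rfl fun σ _ => ?_
  rw [wdz_const_mul (hprod σ), wdz_prod _ fun i _ => hM _ _]
  rfl

theorem mwdz_congr (h : M =ᶠ[𝓝 z] N) : mwdz M j z = mwdz N j z := by
  ext p q
  exact wdz_congr (h.fun_comp fun A => A p q)

theorem mwdz_const (C : Matrix (Fin n) (Fin n) ℂ) : mwdz (fun _ => C) j z = 0 := by
  ext p q
  exact wdz_const _

theorem mwdz_mul (hM : ∀ p q, DifferentiableAt ℝ (fun w => M w p q) z)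
    (hN : ∀ p q, DifferentiableAt ℝ (fun w => N w p q) z) :
    mwdz (fun w => M w * N w) j z = mwdz M j z * N z + M z * mwdz N j z := by
  ext p q
  simp only [mwdz, Matrix.mul_apply, Matrix.of_apply, Matrix.add_apply]
  rw [wdz_sum _ fun k _ => (hM p k).fun_mul (hN k q), ← Finset.sum_add_distrib]
  exact Finset.sum_congr rfl fun k _ => wdz_mul (hM p k) (hN k q)

theorem mwdz_inv (hM : ∀ p q, DifferentiableAt ℝ (fun w => M w p q) z)
    (hMinv : ∀ p q, DifferentiableAt ℝ (fun w => (M w)⁻¹ p q) z)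
    (hdet : ∀ᶠ w in 𝓝 z, IsUnit (M w).det) :
    mwdz (fun w => (M w)⁻¹) j z = -((M z)⁻¹ * mwdz M j z * (M z)⁻¹) := by
  have hprod : mwdz (fun w => (M w)⁻¹) j z * M z + (M z)⁻¹ * mwdz M j z = 0 := by
    rw [← mwdz_mul hMinv hM, ← mwdz_const (j := j) (z := z) 1]
    exact mwdz_congr (hdet.mono fun w hw => Matrix.nonsing_inv_mul _ hw)
  calc mwdz (fun w => (M w)⁻¹) j z
      = mwdz (fun w => (M w)⁻¹) j z * M z * (M z)⁻¹ := by
        rw [Matrix.mul_assoc, Matrix.mul_nonsing_inv _ hdet.self_of_nhds, Matrix.mul_one]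
    _ = -((M z)⁻¹ * mwdz M j z * (M z)⁻¹) := by
        rw [eq_neg_of_add_eq_zero_left hprod, Matrix.neg_mul]

theorem wdz_trace_mul (hM : ∀ p q, DifferentiableAt ℝ (fun w => M w p q) z)
    (hN : ∀ p q, DifferentiableAt ℝ (fun w => N w p q) z) :
    wdz (fun w => (M w * N w).trace) j z = (mwdz M j z * N z).trace + (M z * mwdz N j z).trace := by
  rw [← Matrix.trace_add, ← mwdz_mul hM hN]
  refine wdz_sum _ fun p _ => ?_
  simp only [Matrix.diag, Matrix.mul_apply]
  exact DifferentiableAt.fun_sum fun k _ => (hM p k).fun_mul (hN k p)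

theorem trace_inv_mul_mwdz_of_det_eq_exp (hM : ∀ p q, DifferentiableAt ℝ (fun w => M w p q) z)
    (hf : DifferentiableAt ℝ f z) (hdet : ∀ᶠ w in 𝓝 z, (M w).det = Complex.exp (f w)) :
    ((M z)⁻¹ * mwdz M j z).trace = wdz f j z := by
  have hJacobi := wdz_det hM (j := j)
  rw [wdz_congr hdet, wdz_cexp hf, ← hdet.self_of_nhds] at hJacobi
  have hdet0 : (M z).det ≠ 0 := hdet.self_of_nhds ▸ Complex.exp_ne_zero _
  rw [Matrix.inv_def, Ring.inverse_eq_inv', Matrix.smul_mul, Matrix.trace_smul, ← hJacobi,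
    smul_eq_mul, inv_mul_cancel_left₀ hdet0]

end WirtingerRules

section KahlerEinstein

variable {n : ℕ} {Ω : Set (Fin n → ℂ)} {u : (Fin n → ℂ) → ℝ} {z : Fin n → ℂ}

theorem contDiffOn_cplx {k : WithTop ℕ∞} (hu : ContDiffOn ℝ k u Ω) : ContDiffOn ℝ k (cplx u) Ω :=
  Complex.ofRealCLM.contDiff.comp_contDiffOn hu

theorem contDiffOn_hessA_apply (hΩ : IsOpen Ω) (hu : ContDiffOn ℝ ∞ u Ω) (i j : Fin n) :
    ContDiffOn ℝ ∞ (fun w => hessA u w i j) Ω :=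
  ((contDiffOn_cplx hu).wdzbar hΩ j).wdz hΩ i

theorem mwdzbar_hessB_apply (hΩ : IsOpen Ω) (hu : ContDiffOn ℝ ∞ u Ω) (hz : z ∈ Ω)
    (j p k : Fin n) : mwdzbar (hessB u) j z p k = mwdz (hessA u) p z k j := by
  have hφ := contDiffOn_cplx hu
  have hcomm : Set.EqOn (wdzbar (wdz (cplx u) k) j) (wdz (wdzbar (cplx u) j) k) Ω :=
    fun w hw => (wdz_wdzbar_comm (hφ.contDiffAt_two hΩ hw) k j).symm
  calc mwdzbar (hessB u) j z p k = wdzbar (wdz (wdz (cplx u) k) p) j z := rfl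
    _ = wdz (wdzbar (wdz (cplx u) k) j) p z :=
        (wdz_wdzbar_comm ((hφ.wdz hΩ k).contDiffAt_two hΩ hz) p j).symm
    _ = mwdz (hessA u) p z k j := wdz_congr (Filter.eventuallyEq_of_mem (hΩ.mem_nhds hz) hcomm)

theorem mwdz_mwdzbar_hessB_apply (hΩ : IsOpen Ω) (hu : ContDiffOn ℝ ∞ u Ω) (hz : z ∈ Ω)
    (i j p q : Fin n) :
    mwdz (mwdzbar (hessB u) j) i z p q = mwdz (mwdz (hessA u) q) p z i j := by
  have hg := (contDiffOn_cplx hu).wdzbar hΩ j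
  have hcomm : Set.EqOn (wdz (wdz (wdzbar (cplx u) j) q) i) (wdz (wdz (wdzbar (cplx u) j) i) q) Ω :=
    fun w hw => wdz_wdz_comm (hg.contDiffAt_two hΩ hw) i q
  calc mwdz (mwdzbar (hessB u) j) i z p q
      = wdz (fun w => mwdz (hessA u) p w q j) i z :=
        wdz_congr (Filter.eventuallyEq_of_mem (hΩ.mem_nhds hz)
          fun w hw => mwdzbar_hessB_apply hΩ hu hw j p q)
    _ = wdz (wdz (wdz (wdzbar (cplx u) j) q) i) p z :=
        wdz_wdz_comm ((hg.wdz hΩ q).contDiffAt_two hΩ hz) i p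
    _ = mwdz (mwdz (hessA u) q) p z i j :=
        wdz_congr (Filter.eventuallyEq_of_mem (hΩ.mem_nhds hz) hcomm)

theorem mwdz_mconj_hessA_apply (hΩ : IsOpen Ω) (hu : ContDiffOn ℝ ∞ u Ω)
    (hherm : ∀ w ∈ Ω, (hessA u w).IsHermitian) (hz : z ∈ Ω) (i l q : Fin n) :
    mwdz (fun w => mconj (hessA u w)) i z l q = mwdz (hessA u) q z i l := by
  calc mwdz (fun w => mconj (hessA u w)) i z l q
      = wdz (fun w => hessA u w q l) i z :=
        wdz_congr (Filter.eventuallyEq_of_mem (hΩ.mem_nhds hz) fun w hw => (hherm w hw).apply q l)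
    _ = mwdz (hessA u) q z i l :=
        wdz_wdz_comm (((contDiffOn_cplx hu).wdzbar hΩ l).contDiffAt_two hΩ hz) i q

theorem hessA_det_ne_zero
    (hKE : ∀ z ∈ Ω, (hessA u z).det = (Real.exp ((n + 1) * u z) : ℂ)) (hz : z ∈ Ω) :
    (hessA u z).det ≠ 0 := by
  rw [hKE z hz]
  exact_mod_cast (Real.exp_pos _).ne'

theorem trace_inv_hessA_mul_mwdz (hΩ : IsOpen Ω) (hu : ContDiffOn ℝ ∞ u Ω)
    (hKE : ∀ z ∈ Ω, (hessA u z).det = (Real.exp ((n + 1) * u z) : ℂ)) (hz : z ∈ Ω) (q : Fin n) :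
    ((hessA u z)⁻¹ * mwdz (hessA u) q z).trace = ((n : ℂ) + 1) * wdz (cplx u) q z := by
  have hφ := (contDiffOn_cplx hu).differentiableAt_of_isOpen hΩ hz
  have hdet : ∀ᶠ w in 𝓝 z, (hessA u w).det = Complex.exp (((n : ℂ) + 1) * cplx u w) :=
    Filter.eventually_of_mem (hΩ.mem_nhds hz) fun w hw => by
      rw [hKE w hw, Complex.ofReal_exp]
      push_cast [cplx]
      rfl
  rw [trace_inv_mul_mwdz_of_det_eq_exp
    (fun a b => (contDiffOn_hessA_apply hΩ hu a b).differentiableAt_of_isOpen hΩ hz)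
    (hφ.const_mul _) hdet, wdz_const_mul hφ]

theorem contDiffOn_inv_hessA_apply (hΩ : IsOpen Ω) (hu : ContDiffOn ℝ ∞ u Ω)
    (hKE : ∀ z ∈ Ω, (hessA u z).det = (Real.exp ((n + 1) * u z) : ℂ)) (i j : Fin n) :
    ContDiffOn ℝ ∞ (fun w => (hessA u w)⁻¹ i j) Ω :=
  contDiffOn_inv_apply (contDiffOn_hessA_apply hΩ hu) (fun _ hw => hessA_det_ne_zero hKE hw) i j

theorem mwdz_inv_hessA (hΩ : IsOpen Ω) (hu : ContDiffOn ℝ ∞ u Ω)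
    (hKE : ∀ z ∈ Ω, (hessA u z).det = (Real.exp ((n + 1) * u z) : ℂ)) (hz : z ∈ Ω) (p : Fin n) :
    mwdz (fun w => (hessA u w)⁻¹) p z
      = -((hessA u z)⁻¹ * mwdz (hessA u) p z * (hessA u z)⁻¹) :=
  mwdz_inv (fun a b => (contDiffOn_hessA_apply hΩ hu a b).differentiableAt_of_isOpen hΩ hz)
    (fun a b => (contDiffOn_inv_hessA_apply hΩ hu hKE a b).differentiableAt_of_isOpen hΩ hz)
    (Filter.eventually_of_mem (hΩ.mem_nhds hz) fun _ hw =>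
      isUnit_iff_ne_zero.2 (hessA_det_ne_zero hKE hw))

theorem trace_inv_hessA_mul_mwdz_mwdz (hΩ : IsOpen Ω) (hu : ContDiffOn ℝ ∞ u Ω)
    (hKE : ∀ z ∈ Ω, (hessA u z).det = (Real.exp ((n + 1) * u z) : ℂ)) (hz : z ∈ Ω) (p q : Fin n) :
    ((hessA u z)⁻¹ * mwdz (mwdz (hessA u) q) p z).trace
      = ((hessA u z)⁻¹ * mwdz (hessA u) p z * (hessA u z)⁻¹ * mwdz (hessA u) q z).trace
        + ((n : ℂ) + 1) * hessB u z p q := by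
  have hderiv : wdz (fun w => ((hessA u w)⁻¹ * mwdz (hessA u) q w).trace) p z
      = ((n : ℂ) + 1) * hessB u z p q := by
    rw [wdz_congr (Filter.eventuallyEq_of_mem (hΩ.mem_nhds hz)
      fun w hw => trace_inv_hessA_mul_mwdz hΩ hu hKE hw q)]
    exact wdz_const_mul (((contDiffOn_cplx hu).wdz hΩ q).differentiableAt_of_isOpen hΩ hz) _
  rw [wdz_trace_mul (M := fun w => (hessA u w)⁻¹) (N := mwdz (hessA u) q)
    (fun a b => (contDiffOn_inv_hessA_apply hΩ hu hKE a b).differentiableAt_of_isOpen hΩ hz)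
    (fun a b => ((contDiffOn_hessA_apply hΩ hu a b).wdz hΩ q).differentiableAt_of_isOpen hΩ hz),
    mwdz_inv_hessA hΩ hu hKE hz, Matrix.neg_mul, Matrix.trace_neg] at hderiv
  linear_combination hderiv

theorem mwdzbar_hessB_mul_mul_mwdz_mconj_hessA_apply (hΩ : IsOpen Ω) (hu : ContDiffOn ℝ ∞ u Ω)
    (hherm : ∀ w ∈ Ω, (hessA u w).IsHermitian) (hz : z ∈ Ω) (i j p q : Fin n) :
    (mwdzbar (hessB u) j z * (mconj (hessA u z))⁻¹ * mwdz (fun w => mconj (hessA u w)) i z) p q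
      = (mwdz (hessA u) q z * (hessA u z)⁻¹ * mwdz (hessA u) p z) i j := by
  rw [mconj_eq_transpose_of_isHermitian (hherm z hz), ← Matrix.transpose_nonsing_inv]
  simp only [Matrix.mul_apply, Matrix.transpose_apply, mwdzbar_hessB_apply hΩ hu hz,
    mwdz_mconj_hessA_apply hΩ hu hherm hz, Finset.sum_mul]
  rw [Finset.sum_comm]
  exact Finset.sum_congr rfl fun _ _ => Finset.sum_congr rfl fun _ _ => by ring

end KahlerEinstein

theorem sum_uInv_smul_apply {n : ℕ} (u : (Fin n → ℂ) → ℝ) (z : Fin n → ℂ)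
    (F : Fin n → Fin n → Matrix (Fin n) (Fin n) ℂ) (p q : Fin n) :
    (∑ i, ∑ j, uInv u z i j • F i j) p q
      = ((hessA u z)⁻¹ * Matrix.of fun i j => F i j p q).trace := by
  simp only [Matrix.sum_apply, Matrix.smul_apply, smul_eq_mul, Matrix.trace, Matrix.diag,
    Matrix.mul_apply, Matrix.of_apply, uInv]
  exact Finset.sum_comm

theorem laplacian_B_eq_BA (n : ℕ) (Ω : Set (Fin n → ℂ)) (hΩ : IsOpen Ω)
    (u : (Fin n → ℂ) → ℝ) (hu : ContDiffOn ℝ (⊤ : ℕ∞) u Ω)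
    (hpsh : ∀ z ∈ Ω, (hessA u z).PosDef)
    (hKE : ∀ z ∈ Ω, (hessA u z).det = (Real.exp ((n + 1) * u z) : ℂ)) :
    ∀ z ∈ Ω,
      ∑ i, ∑ j, uInv u z i j • mwdz (mwdzbar (hessB u) j) i z
        = (∑ i, ∑ j, uInv u z i j •
            (mwdzbar (hessB u) j z * (mconj (hessA u z))⁻¹ *
              mwdz (fun w => mconj (hessA u w)) i z))
          + ((n : ℂ) + 1) • hessB u z := by
  intro z hz
  ext p q
  set N := (hessA u z)⁻¹
  set P := mwdz (hessA u) p z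
  set Q := mwdz (hessA u) q z
  have hLHS : (Matrix.of fun i j => mwdz (mwdzbar (hessB u) j) i z p q)
      = mwdz (mwdz (hessA u) q) p z :=
    Matrix.ext fun i j => mwdz_mwdzbar_hessB_apply hΩ hu hz i j p q
  have hRHS : (Matrix.of fun i j => (mwdzbar (hessB u) j z * (mconj (hessA u z))⁻¹ *
        mwdz (fun w => mconj (hessA u w)) i z) p q) = Q * N * P :=
    Matrix.ext fun i j => mwdzbar_hessB_mul_mul_mwdz_mconj_hessA_apply hΩ hu
      (fun w hw => (hpsh w hw).isHermitian) hz i j p q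
  simp only [Matrix.add_apply, sum_uInv_smul_apply, Matrix.smul_apply, smul_eq_mul, hLHS, hRHS,
    trace_inv_hessA_mul_mwdz_mwdz hΩ hu hKE hz p q]
  congr 1
  calc (N * P * N * Q).trace = (N * P * (N * Q)).trace := by simp only [Matrix.mul_assoc]
    _ = (N * Q * (N * P)).trace := Matrix.trace_mul_comm _ _
    _ = (N * (Q * N * P)).trace := by simp only [Matrix.mul_assoc]

end
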